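/- Let n ≥ 0 be an integer and let P(x) = ∑_{k=0}^n ∑_{j=0}^k c_{j,k} · U_k(θ_{j,k}; x) with real coefficients c_{j,k}. Then for every φ ∈ ℝ and every t ∈ (-1,1), R_φ(P; t) = √(1-t²) · ∑_{k=0}^n (2/(k+1)) · U_k(t) · ∑_{j=0}^k c_{j,k} · U_k(cos(φ - θ_{j,k})). -/

import Mathlib

open MeasureTheory Real Finset

/-- `chebU k` is the Chebyshev polynomial of the second kind of degree `k`,
evaluated as a real function. -/
noncomputable def chebU (k : ℕ) (x : ℝ) : ℝ :=
  (Polynomial.Chebyshev.U ℝ (k : ℤ)).eval x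

/-- The ridge polynomial `U_k(θ; x) = U_k(x₁ cos θ + x₂ sin θ)`. -/
noncomputable def ridge (k : ℕ) (θ : ℝ) (x : ℝ × ℝ) : ℝ :=
  chebU k (x.1 * Real.cos θ + x.2 * Real.sin θ)

/-- The Radon projection `R_θ(f; t)` of `f : ℝ² → ℝ`. -/
noncomputable def radon (f : ℝ × ℝ → ℝ) (θ t : ℝ) : ℝ :=
  ∫ s in (-Real.sqrt (1 - t ^ 2))..(Real.sqrt (1 - t ^ 2)),
    f (t * Real.cos θ - s * Real.sin θ, t * Real.sin θ + s * Real.cos θ)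

lemma chebU_cos (k : ℕ) (x : ℝ) :
    chebU k (Real.cos x) * Real.sin x = Real.sin ((k + 1) * x) := by
  have h := Polynomial.Chebyshev.U_real_cos x (k : ℤ)
  rw [chebU, h]
  norm_num

lemma chebU_add_two (k : ℕ) (x : ℝ) :
    chebU (k + 2) x = 2 * x * chebU (k + 1) x - chebU k x := by
  have h : ((k + 2 : ℕ) : ℤ) = (k : ℤ) + 2 := by push_cast; ring
  rw [chebU, h, Polynomial.Chebyshev.U_add_two]
  push_cast [chebU]
  simp [chebU]

lemma chebU_at_one (k : ℕ) : chebU k 1 = k + 1 := by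
  induction k using Nat.twoStepInduction with
  | zero => simp [chebU, Polynomial.Chebyshev.U_zero]
  | one => norm_num [chebU, Polynomial.Chebyshev.U_one]
  | more k ih1 ih2 =>
    rw [chebU_add_two, ih1, ih2]
    push_cast; ring

lemma chebU_neg (k : ℕ) (x : ℝ) : chebU k (-x) = (-1) ^ k * chebU k x := by
  induction k using Nat.twoStepInduction generalizing x with
  | zero => simp [chebU, Polynomial.Chebyshev.U_zero]
  | one => simp [chebU, Polynomial.Chebyshev.U_one]
  | more k ih1 ih2 =>
    rw [chebU_add_two, chebU_add_two, ih1, ih2]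
    ring

lemma chebU_continuous (k : ℕ) : Continuous (chebU k) :=
  (Polynomial.Chebyshev.U ℝ (k : ℤ)).continuous

lemma marr (k : ℕ) (t ψ : ℝ) (ht1 : -1 < t) (ht2 : t < 1) :
    (∫ s in (-Real.sqrt (1 - t ^ 2))..(Real.sqrt (1 - t ^ 2)),
      chebU k (t * Real.cos ψ + s * Real.sin ψ))
    = Real.sqrt (1 - t ^ 2) * ((2 / (k + 1)) * chebU k t * chebU k (Real.cos ψ)) := by
  have hk1 : ((k : ℝ) + 1) ≠ 0 := by positivity
  set h := Real.sqrt (1 - t ^ 2) with hh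
  have hα : Real.sin (Real.arccos t) = h := Real.sin_arccos t
  have hcα : Real.cos (Real.arccos t) = t := Real.cos_arccos ht1.le ht2.le
  set α := Real.arccos t with hαdef
  have hhpos : 0 < h := by
    rw [hh]; apply Real.sqrt_pos.2; nlinarith
  by_cases hψ : Real.sin ψ = 0
  · have hsq : (Real.cos ψ - 1) * (Real.cos ψ + 1) = 0 := by
      have := Real.sin_sq_add_cos_sq ψ; rw [hψ] at this; nlinarith
    have hint : (∫ s in (-h)..h, chebU k (t * Real.cos ψ + s * Real.sin ψ))
        = 2 * h * chebU k (t * Real.cos ψ) := by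
      rw [hψ]
      simp only [mul_zero, add_zero, intervalIntegral.integral_const, smul_eq_mul,
        sub_neg_eq_add]
      ring
    rcases mul_eq_zero.1 hsq with h1 | h1
    · have hc : Real.cos ψ = 1 := by linarith
      rw [hint, hc, chebU_at_one]
      field_simp
    · have hc : Real.cos ψ = -1 := by linarith
      rw [hint, hc]
      have e1 : t * (-1 : ℝ) = -t := by ring
      rw [e1, chebU_neg]
      have e2 : (-1 : ℝ) = -(1 : ℝ) := by norm_num
      rw [e2, chebU_neg, chebU_at_one]
      field_simp
  · set F : ℝ → ℝ := fun s =>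
      (Polynomial.Chebyshev.T ℝ ((k : ℤ) + 1)).eval (t * Real.cos ψ + s * Real.sin ψ)
        / (((k : ℝ) + 1) * Real.sin ψ) with hF
    have hderiv : ∀ s : ℝ, HasDerivAt F (chebU k (t * Real.cos ψ + s * Real.sin ψ)) s := by
      intro s
      have h1 : HasDerivAt (fun s : ℝ => t * Real.cos ψ + s * Real.sin ψ) (Real.sin ψ) s := by
        simpa using ((hasDerivAt_id s).mul_const (Real.sin ψ)).const_add (t * Real.cos ψ)
      have h2 := ((Polynomial.Chebyshev.T ℝ ((k : ℤ) + 1)).hasDerivAt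
        (t * Real.cos ψ + s * Real.sin ψ)).comp s h1
      have h3 := h2.div_const (((k : ℝ) + 1) * Real.sin ψ)
      refine h3.congr_deriv ?_
      symm
      rw [Polynomial.Chebyshev.T_derivative_eq_U]
      simp only [add_sub_cancel_right, Polynomial.eval_mul, Polynomial.eval_intCast]
      rw [chebU]
      push_cast
      field_simp
    have hcont : Continuous fun s : ℝ => chebU k (t * Real.cos ψ + s * Real.sin ψ) :=
      (chebU_continuous k).comp (by continuity)
    rw [intervalIntegral.integral_eq_sub_of_hasDerivAt (fun s _ => hderiv s)
      (hcont.intervalIntegrable _ _)]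
    have e1 : t * Real.cos ψ + h * Real.sin ψ = Real.cos (α - ψ) := by
      rw [Real.cos_sub, hcα, hα]
    have e2 : t * Real.cos ψ + (-h) * Real.sin ψ = Real.cos (α + ψ) := by
      rw [Real.cos_add, hcα, hα]; ring
    rw [hF]
    simp only [e1, e2, Polynomial.Chebyshev.T_real_cos]
    have hsum : Real.cos (((k : ℝ) + 1) * (α - ψ)) - Real.cos (((k : ℝ) + 1) * (α + ψ))
        = 2 * Real.sin (((k : ℝ) + 1) * α) * Real.sin (((k : ℝ) + 1) * ψ) := by
      rw [Real.cos_sub_cos]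
      have e3 : (((k : ℝ) + 1) * (α - ψ) + ((k : ℝ) + 1) * (α + ψ)) / 2
          = ((k : ℝ) + 1) * α := by ring
      have e4 : (((k : ℝ) + 1) * (α - ψ) - ((k : ℝ) + 1) * (α + ψ)) / 2
          = -(((k : ℝ) + 1) * ψ) := by ring
      rw [e3, e4, Real.sin_neg]
      ring
    have hu1 : chebU k t * h = Real.sin (((k : ℝ) + 1) * α) := by
      rw [← hcα, ← hα]; exact chebU_cos k α
    have hu2 : chebU k (Real.cos ψ) * Real.sin ψ = Real.sin (((k : ℝ) + 1) * ψ) := chebU_cos k ψ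
    push_cast
    rw [div_sub_div_same, hsum, ← hu1, ← hu2]
    field_simp

lemma radon_ridge_aux (k : ℕ) (θ φ t : ℝ) (ht1 : -1 < t) (ht2 : t < 1) :
    (∫ s in (-Real.sqrt (1 - t ^ 2))..(Real.sqrt (1 - t ^ 2)),
      ridge k θ (t * Real.cos φ - s * Real.sin φ, t * Real.sin φ + s * Real.cos φ))
    = Real.sqrt (1 - t ^ 2) *
      ((2 / (k + 1)) * chebU k t * chebU k (Real.cos (φ - θ))) := by
  have key : ∀ s : ℝ,
      ridge k θ (t * Real.cos φ - s * Real.sin φ, t * Real.sin φ + s * Real.cos φ)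
        = chebU k (t * Real.cos (θ - φ) + s * Real.sin (θ - φ)) := by
    intro s
    rw [ridge]
    congr 1
    rw [Real.cos_sub, Real.sin_sub]
    ring
  simp_rw [key]
  rw [marr k t (θ - φ) ht1 ht2, ← Real.cos_neg (θ - φ), neg_sub]

/-- The Radon projection of `P(x) = ∑_{k=0}^n ∑_{j=0}^k c_{j,k} U_k(θ_{j,k}; x)`,
with `θ_{j,k} = jπ/(k+1)`. -/
theorem radon_of_ridge_expansion (n : ℕ) (c : ℕ → ℕ → ℝ) (P : ℝ × ℝ → ℝ)
    (hP : P = fun x => ∑ k ∈ Finset.range (n + 1), ∑ j ∈ Finset.range (k + 1),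
      c j k * ridge k (j * π / (k + 1)) x)
    (φ t : ℝ) (ht : t ∈ Set.Ioo (-1 : ℝ) 1) :
    radon P φ t = Real.sqrt (1 - t ^ 2) * ∑ k ∈ Finset.range (n + 1),
      (2 / (k + 1)) * chebU k t * ∑ j ∈ Finset.range (k + 1),
        c j k * chebU k (Real.cos (φ - j * π / (k + 1))) := by
  obtain ⟨ht1, ht2⟩ := ht
  have hcont : ∀ (k j : ℕ), Continuous fun s : ℝ =>
      c j k * ridge k ((j : ℝ) * π / (k + 1))
        (t * Real.cos φ - s * Real.sin φ, t * Real.sin φ + s * Real.cos φ) := by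
    intro k j
    apply continuous_const.mul
    unfold ridge
    exact (chebU_continuous k).comp (by continuity)
  simp only [hP, radon]
  rw [intervalIntegral.integral_finset_sum (fun k _ => (Continuous.intervalIntegrable
    (continuous_finset_sum _ fun j _ => hcont k j) _ _))]
  rw [Finset.mul_sum]
  refine Finset.sum_congr rfl fun k _ => ?_
  rw [intervalIntegral.integral_finset_sum (fun j _ =>
    (hcont k j).intervalIntegrable _ _)]
  simp_rw [intervalIntegral.integral_const_mul, radon_ridge_aux k _ φ t ht1 ht2,
    Finset.mul_sum]
  refine Finset.sum_congr rfl fun j _ => ?_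
  ring
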